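/- arXiv:math/0112276 — 9 statements merged into one kernel-verified Lean document; each statement's English description precedes it below -/
import Mathlib

section
/- Let F be a (possibly noncommutative) division ring and let f, g be nonzero elements of a subring identified with elements f^{(1)}, g^{(1)} in the first tensor factor and f^{(2)}, g^{(2)} in the second, where elements with superscript (1) commute with elements with superscript (2). If [f,g] := f^{(1)}g^{(2)} - g^{(1)}f^{(2)} is invertible, then f^{(1)}[f,g]^{-1}g^{(2)} - g^{(1)}[f,g]^{-1}f^{(2)} = 1. -/
private lemma key_identity {F : Type*} [DivisionRing F] (a b x y : F) (hy : y ≠ 0)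
    (hax : Commute a x) (hay : Commute a y) (hbx : Commute b x) (hby : Commute b y)
    (hD : a * y - b * x ≠ 0) :
    a * (a * y - b * x)⁻¹ * y - b * (a * y - b * x)⁻¹ * x = 1 := by
  set D := a * y - b * x with hDdef
  set s := y⁻¹ * x with hs
  set v := a - s * b with hv
  have hsa : Commute s a := by rw [hs]; exact (hay.symm.inv_left₀).mul_left hax.symm
  have hsb : Commute s b := by rw [hs]; exact (hby.symm.inv_left₀).mul_left hbx.symm
  have hyv : y * v = D := by
    have : y * (y⁻¹ * x * b) = x * b := by
      rw [← mul_assoc, ← mul_assoc, mul_inv_cancel₀ hy, one_mul]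
    rw [hv, mul_sub, hs, this, hDdef, hay.eq, hbx.eq]
  have hvne : v ≠ 0 := by
    intro h
    rw [h, mul_zero] at hyv
    exact hD hyv.symm
  have hDinv : D⁻¹ = v⁻¹ * y⁻¹ := by
    rw [← hyv, mul_inv_rev]
  have hsv : Commute s v := by
    rw [hv]
    exact hsa.sub_right (Commute.mul_right rfl hsb)
  have hsvinv : Commute s v⁻¹ := hsv.inv_right₀
  calc a * D⁻¹ * y - b * D⁻¹ * x
      = a * (v⁻¹ * (y⁻¹ * y)) - b * (v⁻¹ * (y⁻¹ * x)) := by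
        rw [hDinv]; simp only [mul_assoc]
    _ = a * v⁻¹ - b * (v⁻¹ * s) := by
        rw [inv_mul_cancel₀ hy, mul_one, ← hs]
    _ = a * v⁻¹ - s * b * v⁻¹ := by
        rw [← hsvinv.eq, ← mul_assoc, ← hsb.eq.symm, mul_assoc, ← mul_assoc, hsb.eq.symm]
    _ = (a - s * b) * v⁻¹ := by rw [sub_mul]
    _ = 1 := by rw [← hv, mul_inv_cancel₀ hvne]

/-- In a skew field `F` containing two elementwise-commuting copies of a
ring `A` (via ring injections `φ = ·⁽¹⁾` and `ψ = ·⁽²⁾`), if `f, g ∈ A` have invertible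
(nonzero) images and the bracket `[f,g] = f⁽¹⁾g⁽²⁾ - g⁽¹⁾f⁽²⁾` is nonzero, then
`f⁽¹⁾[f,g]⁻¹g⁽²⁾ - g⁽¹⁾[f,g]⁻¹f⁽²⁾ = 1`. -/
theorem stmt0 {A F : Type*} [Ring A] [DivisionRing F]
    (φ ψ : A →+* F) (hφ : Function.Injective φ) (hψ : Function.Injective ψ)
    (hcomm : ∀ a b : A, φ a * ψ b = ψ b * φ a)
    (f g : A)
    (hf1 : φ f ≠ 0) (hf2 : ψ f ≠ 0) (hg1 : φ g ≠ 0) (hg2 : ψ g ≠ 0)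
    (hbr : φ f * ψ g - φ g * ψ f ≠ 0) :
    φ f * (φ f * ψ g - φ g * ψ f)⁻¹ * ψ g
      - φ g * (φ f * ψ g - φ g * ψ f)⁻¹ * ψ f = 1 := by
  exact key_identity (φ f) (φ g) (ψ f) (ψ g) hg2
    (hcomm f f) (hcomm f g) (hcomm g f) (hcomm g g) hbr
end

section
/- Let F be a division ring with two elementwise-commuting embedded copies of a ring A (notation a^{(1)}, a^{(2)}), and f, g ∈ A with all of f^{(1)}, f^{(2)}, g^{(1)}, g^{(2)} invertible and [f,g] := f^{(1)}g^{(2)} - g^{(1)}f^{(2)} nonzero. Then f^{(1)}[f,g]^{-1}g^{(1)} = g^{(1)}[f,g]^{-1}f^{(1)}. -/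
/-- With two elementwise-commuting embedded copies of `A` in a skew field `F`
and `[f,g] = f⁽¹⁾g⁽²⁾ - g⁽¹⁾f⁽²⁾ ≠ 0`, one has `f⁽¹⁾[f,g]⁻¹g⁽¹⁾ = g⁽¹⁾[f,g]⁻¹f⁽¹⁾`. -/
theorem stmt1 {A F : Type*} [Ring A] [DivisionRing F]
    (φ ψ : A →+* F) (hφ : Function.Injective φ) (hψ : Function.Injective ψ)
    (hcomm : ∀ a b : A, φ a * ψ b = ψ b * φ a)
    (f g : A)
    (hf1 : φ f ≠ 0) (hf2 : ψ f ≠ 0) (hg1 : φ g ≠ 0) (hg2 : ψ g ≠ 0)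
    (hbr : φ f * ψ g - φ g * ψ f ≠ 0) :
    φ f * (φ f * ψ g - φ g * ψ f)⁻¹ * φ g
      = φ g * (φ f * ψ g - φ g * ψ f)⁻¹ * φ f := by
  set a := φ f with ha
  set b := ψ g with hb
  set c := φ g with hc
  set d := ψ f with hd
  set D := a * b - c * d with hD
  have hab : Commute a b := hcomm f g
  have had : Commute a d := hcomm f f
  have hcb : Commute c b := hcomm g g
  have hcd : Commute c d := hcomm g f
  have lhs : c⁻¹ * D * a⁻¹ = b * c⁻¹ - a⁻¹ * d := by
    rw [hD, mul_sub, sub_mul]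
    congr 1
    · calc c⁻¹ * (a * b) * a⁻¹ = c⁻¹ * (b * a) * a⁻¹ := by rw [hab.eq]
        _ = c⁻¹ * b * (a * a⁻¹) := by simp only [mul_assoc]
        _ = c⁻¹ * b := by rw [mul_inv_cancel₀ hf1, mul_one]
        _ = b * c⁻¹ := hcb.inv_left₀.eq
    · calc c⁻¹ * (c * d) * a⁻¹ = c⁻¹ * c * (d * a⁻¹) := by simp only [mul_assoc]
        _ = d * a⁻¹ := by rw [inv_mul_cancel₀ hg1, one_mul]
        _ = a⁻¹ * d := had.inv_left₀.eq.symm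
  have rhs : a⁻¹ * D * c⁻¹ = b * c⁻¹ - a⁻¹ * d := by
    rw [hD, mul_sub, sub_mul]
    congr 1
    · calc a⁻¹ * (a * b) * c⁻¹ = a⁻¹ * a * (b * c⁻¹) := by simp only [mul_assoc]
        _ = b * c⁻¹ := by rw [inv_mul_cancel₀ hf1, one_mul]
    · calc a⁻¹ * (c * d) * c⁻¹ = a⁻¹ * (d * c) * c⁻¹ := by rw [hcd.eq]
        _ = a⁻¹ * d * (c * c⁻¹) := by simp only [mul_assoc]
        _ = a⁻¹ * d := by rw [mul_inv_cancel₀ hg1, mul_one]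
  have key : c⁻¹ * D * a⁻¹ = a⁻¹ * D * c⁻¹ := by rw [lhs, rhs]
  calc a * D⁻¹ * c = (c⁻¹ * D * a⁻¹)⁻¹ := by
        rw [mul_inv_rev, mul_inv_rev, inv_inv, inv_inv, mul_assoc]
    _ = (a⁻¹ * D * c⁻¹)⁻¹ := by rw [key]
    _ = c * D⁻¹ * a := by rw [mul_inv_rev, mul_inv_rev, inv_inv, inv_inv, mul_assoc]
end

section
/- Let F be a division ring containing two elementwise-commuting copies of a ring A (notation a^{(1)}, a^{(2)}). For f, g, h ∈ A with the bracket [f,g] := f^{(1)}g^{(2)} - g^{(1)}f^{(2)} nonzero and all images of f, g, h invertible, one has ([f,h])([f,g])^{-1}([g,h]) = ([g,h])([f,g])^{-1}([f,h]), where [a,b] := a^{(1)}b^{(2)} - b^{(1)}a^{(2)}. -/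
/-- Core symmetry: with `p, q` commuting with `β, δ` and `W = p*δ - q*β`,
one has `β * W⁻¹ * δ = δ * W⁻¹ * β`. -/
lemma stmt2_core {F : Type*} [DivisionRing F] (p q β δ : F)
    (hpβ : p * β = β * p) (hpδ : p * δ = δ * p)
    (hqβ : q * β = β * q) (hqδ : q * δ = δ * q)
    (hβ : β ≠ 0) (hδ : δ ≠ 0) :
    β * (p * δ - q * β)⁻¹ * δ = δ * (p * δ - q * β)⁻¹ * β := by
  have hA : β * p * β⁻¹ = p := by
    rw [← hpβ, mul_assoc, mul_inv_cancel₀ hβ, mul_one]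
  have hB : δ * q * δ⁻¹ = q := by
    rw [← hqδ, mul_assoc, mul_inv_cancel₀ hδ, mul_one]
  have h1 : p * δ - q * β = β * ((p * β⁻¹ - q * δ⁻¹) * δ) := by
    have : β * ((p * β⁻¹ - q * δ⁻¹) * δ) = (β * p * β⁻¹) * δ - (β * q) * (δ⁻¹ * δ) := by
      noncomm_ring
    rw [this, hA, inv_mul_cancel₀ hδ, mul_one, ← hqβ]
  have h2 : p * δ - q * β = δ * ((p * β⁻¹ - q * δ⁻¹) * β) := by
    have : δ * ((p * β⁻¹ - q * δ⁻¹) * β) = (δ * p) * (β⁻¹ * β) - (δ * q * δ⁻¹) * β := by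
      noncomm_ring
    rw [this, hB, inv_mul_cancel₀ hβ, mul_one, ← hpδ]
  calc β * (p * δ - q * β)⁻¹ * δ
      = β * (δ * ((p * β⁻¹ - q * δ⁻¹) * β))⁻¹ * δ := by rw [← h2]
    _ = (p * β⁻¹ - q * δ⁻¹)⁻¹ := by
        simp [mul_inv_rev, mul_assoc, inv_mul_cancel₀ hβ, inv_mul_cancel₀ hδ,
          mul_inv_cancel₀ hβ, mul_inv_cancel₀ hδ, mul_inv_cancel_left₀ hβ, mul_inv_cancel_left₀ hδ]
    _ = δ * (β * ((p * β⁻¹ - q * δ⁻¹) * δ))⁻¹ * β := by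
        simp [mul_inv_rev, mul_assoc, inv_mul_cancel₀ hβ, inv_mul_cancel₀ hδ,
          mul_inv_cancel₀ hβ, mul_inv_cancel₀ hδ, mul_inv_cancel_left₀ hβ, mul_inv_cancel_left₀ hδ]
    _ = δ * (p * δ - q * β)⁻¹ * β := by rw [← h1]

/-- Symmetric identity in normalized form: `(p-β) W⁻¹ (q-δ) = (q-δ) W⁻¹ (p-β)`
for `W = p*δ - q*β`, when `p, q` commute with `β, δ`. -/
lemma stmt2_main {F : Type*} [DivisionRing F] (p q β δ : F)
    (hpβ : p * β = β * p) (hpδ : p * δ = δ * p)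
    (hqβ : q * β = β * q) (hqδ : q * δ = δ * q)
    (hβ : β ≠ 0) (hδ : δ ≠ 0) (hW : p * δ - q * β ≠ 0) :
    (p - β) * (p * δ - q * β)⁻¹ * (q - δ)
      = (q - δ) * (p * δ - q * β)⁻¹ * (p - β) := by
  obtain ⟨W, hWdef⟩ : ∃ W, W = p * δ - q * β := ⟨_, rfl⟩
  rw [← hWdef] at hW ⊢
  obtain ⟨u, hudef⟩ : ∃ u, u = p - β := ⟨_, rfl⟩
  obtain ⟨v, hvdef⟩ : ∃ v, v = q - δ := ⟨_, rfl⟩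
  rw [← hudef, ← hvdef]
  have hβu : β * u = u * β := by
    rw [hudef, mul_sub, sub_mul, hpβ]
  have hvβ : v * β = δ * u - W := by
    rw [hvdef, hudef, hWdef, sub_mul, mul_sub, ← hpδ]; abel
  have hβv : β * v = u * δ - W := by
    rw [hvdef, hudef, hWdef, mul_sub, sub_mul, ← hqβ]; abel
  have hcore : β * W⁻¹ * δ = δ * W⁻¹ * β := by
    rw [hWdef]; exact stmt2_core p q β δ hpβ hpδ hqβ hqδ hβ hδ
  refine mul_left_cancel₀ hβ (mul_right_cancel₀ hβ ?_)
  calc β * (u * W⁻¹ * v) * β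
      = (β * u) * W⁻¹ * (v * β) := by noncomm_ring
    _ = (u * β) * W⁻¹ * (δ * u - W) := by rw [hβu, hvβ]
    _ = u * (β * W⁻¹ * δ) * u - u * β * (W⁻¹ * W) := by noncomm_ring
    _ = u * (δ * W⁻¹ * β) * u - u * β := by
        rw [hcore, inv_mul_cancel₀ hW, mul_one]
    _ = (u * δ - W) * W⁻¹ * (β * u) := by
        have : (u * δ - W) * W⁻¹ * (β * u)
            = u * (δ * W⁻¹ * β) * u - (W * W⁻¹) * (β * u) := by noncomm_ring
        rw [this, mul_inv_cancel₀ hW, one_mul, hβu]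
    _ = (β * v) * W⁻¹ * (u * β) := by rw [hβv, hβu]
    _ = β * (v * W⁻¹ * u) * β := by noncomm_ring

/-- Abstract version of the theorem with the six images as elements of `F`. -/
lemma stmt2_aux {F : Type*} [DivisionRing F] (a b c d e k : F)
    (hab : Commute a b) (had : Commute a d) (hak : Commute a k)
    (hcb : Commute c b) (hcd : Commute c d) (hck : Commute c k)
    (heb : Commute e b) (hed : Commute e d) (hek : Commute e k)
    (hb : b ≠ 0) (hd : d ≠ 0) (he : e ≠ 0) (hk : k ≠ 0)
    (hbr : a * d - c * b ≠ 0) :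
    (a * k - e * b) * (a * d - c * b)⁻¹ * (c * k - e * d)
      = (c * k - e * d) * (a * d - c * b)⁻¹ * (a * k - e * b) := by
  obtain ⟨p, hp⟩ : ∃ p, p = e⁻¹ * a := ⟨_, rfl⟩
  obtain ⟨q, hq⟩ : ∃ q, q = e⁻¹ * c := ⟨_, rfl⟩
  obtain ⟨β, hβ⟩ : ∃ β, β = b * k⁻¹ := ⟨_, rfl⟩
  obtain ⟨δ, hδ⟩ : ∃ δ, δ = d * k⁻¹ := ⟨_, rfl⟩
  have cpβ : Commute p β := by
    rw [hp, hβ]; exact ((heb.inv_left₀).mul_left hab).mul_right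
      (((hek.inv_left₀).mul_left hak).inv_right₀)
  have cpδ : Commute p δ := by
    rw [hp, hδ]; exact ((hed.inv_left₀).mul_left had).mul_right
      (((hek.inv_left₀).mul_left hak).inv_right₀)
  have cqβ : Commute q β := by
    rw [hq, hβ]; exact ((heb.inv_left₀).mul_left hcb).mul_right
      (((hek.inv_left₀).mul_left hck).inv_right₀)
  have cqδ : Commute q δ := by
    rw [hq, hδ]; exact ((hed.inv_left₀).mul_left hcd).mul_right
      (((hek.inv_left₀).mul_left hck).inv_right₀)
  have hβ0 : β ≠ 0 := by rw [hβ]; exact mul_ne_zero hb (inv_ne_zero hk)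
  have hδ0 : δ ≠ 0 := by rw [hδ]; exact mul_ne_zero hd (inv_ne_zero hk)
  have hFf : a * k - e * b = e * ((p - β) * k) := by
    rw [hp, hβ]
    have : e * ((e⁻¹ * a - b * k⁻¹) * k) = (e * e⁻¹) * (a * k) - (e * b) * (k⁻¹ * k) := by
      noncomm_ring
    rw [this, mul_inv_cancel₀ he, inv_mul_cancel₀ hk, one_mul, mul_one]
  have hFg : c * k - e * d = e * ((q - δ) * k) := by
    rw [hq, hδ]
    have : e * ((e⁻¹ * c - d * k⁻¹) * k) = (e * e⁻¹) * (c * k) - (e * d) * (k⁻¹ * k) := by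
      noncomm_ring
    rw [this, mul_inv_cancel₀ he, inv_mul_cancel₀ hk, one_mul, mul_one]
  have hFden : a * d - c * b = e * ((p * δ - q * β) * k) := by
    rw [hp, hq, hβ, hδ]
    have : e * ((e⁻¹ * a * (d * k⁻¹) - e⁻¹ * c * (b * k⁻¹)) * k)
        = (e * e⁻¹) * (a * d) * (k⁻¹ * k) - (e * e⁻¹) * (c * b) * (k⁻¹ * k) := by
      noncomm_ring
    rw [this, mul_inv_cancel₀ he, inv_mul_cancel₀ hk, one_mul, one_mul, mul_one, mul_one]
  have hW0 : p * δ - q * β ≠ 0 := by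
    intro h0
    apply hbr
    rw [hFden, h0, zero_mul, mul_zero]
  have collapse : ∀ u v : F,
      (e * (u * k)) * (e * ((p * δ - q * β) * k))⁻¹ * (e * (v * k))
        = e * (u * (p * δ - q * β)⁻¹ * v) * k := by
    intro u v
    rw [mul_inv_rev, mul_inv_rev]
    have : e * (u * k) * (k⁻¹ * (p * δ - q * β)⁻¹ * e⁻¹) * (e * (v * k))
        = e * ((u * ((k * k⁻¹) * ((p * δ - q * β)⁻¹ * ((e⁻¹ * e) * v)))) * k) := by
      noncomm_ring
    rw [this, mul_inv_cancel₀ hk, inv_mul_cancel₀ he, one_mul, one_mul]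
    noncomm_ring
  rw [hFf, hFg, hFden, collapse (p - β) (q - δ), collapse (q - δ) (p - β),
    stmt2_main p q β δ cpβ.eq cpδ.eq cqβ.eq cqδ.eq hβ0 hδ0 hW0]

/-- With two elementwise-commuting embedded copies of `A` in a skew field `F`,
setting `[a,b] = a⁽¹⁾b⁽²⁾ - b⁽¹⁾a⁽²⁾`, if the images of `f, g, h` are invertible and
`[f,g] ≠ 0`, then `[f,h][f,g]⁻¹[g,h] = [g,h][f,g]⁻¹[f,h]`. -/
theorem stmt2 {A F : Type*} [Ring A] [DivisionRing F]
    (φ ψ : A →+* F) (hφ : Function.Injective φ) (hψ : Function.Injective ψ)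
    (hcomm : ∀ a b : A, φ a * ψ b = ψ b * φ a)
    (f g h : A)
    (hf1 : φ f ≠ 0) (hf2 : ψ f ≠ 0) (hg1 : φ g ≠ 0) (hg2 : ψ g ≠ 0)
    (hh1 : φ h ≠ 0) (hh2 : ψ h ≠ 0)
    (hbr : φ f * ψ g - φ g * ψ f ≠ 0) :
    (φ f * ψ h - φ h * ψ f) * (φ f * ψ g - φ g * ψ f)⁻¹ * (φ g * ψ h - φ h * ψ g)
      = (φ g * ψ h - φ h * ψ g) * (φ f * ψ g - φ g * ψ f)⁻¹ * (φ f * ψ h - φ h * ψ f) := by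
  exact stmt2_aux (φ f) (ψ f) (φ g) (ψ g) (φ h) (ψ h)
    (hcomm f f) (hcomm f g) (hcomm f h)
    (hcomm g f) (hcomm g g) (hcomm g h)
    (hcomm h f) (hcomm h g) (hcomm h h)
    hf2 hg2 hh1 hh2 hbr
end

section
/- Let F be a division ring containing two elementwise-commuting copies of a ring A, and let f, g, h ∈ A with [f,g] nonzero. Define H_1 = [f,g]^{-1}[g,h] and H_2 = [f,g]^{-1}[f,h], where [a,b] = a^{(1)}b^{(2)} - b^{(1)}a^{(2)}. If all images of f, g, h are invertible, then H_1 H_2 = H_2 H_1. -/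
private lemma key3 {F : Type*} [DivisionRing F] (b c y z : F)
    (hby : b * y = y * b) (hbz : b * z = z * b)
    (hcy : c * y = y * c) (hcz : c * z = z * c)
    (hP : y - b ≠ 0) :
    (b * z - c * y) * ((y - b)⁻¹ * (z - c))
      = (z - c) * ((y - b)⁻¹ * (b * z - c * y)) := by
  set P := y - b with hPdef
  set Q := z - c with hQdef
  have hbP : b * P = P * b := by
    simp only [hPdef, mul_sub, sub_mul, hby]
  have hcQ : c * Q = Q * c := by
    simp only [hQdef, mul_sub, sub_mul, hcz]
  have hbPi : b * P⁻¹ = P⁻¹ * b := (Commute.inv_right₀ hbP).eq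
  have hN1 : b * z - c * y = Q * b - c * P := by
    simp only [hQdef, hPdef, sub_mul, mul_sub, ← hbz]
    abel
  have hN2 : b * z - c * y = b * Q - P * c := by
    simp only [hQdef, hPdef, sub_mul, mul_sub, hcy]
    abel
  have hPP : P * P⁻¹ = 1 := mul_inv_cancel₀ hP
  have hPPi : P⁻¹ * P = 1 := inv_mul_cancel₀ hP
  calc (b * z - c * y) * (P⁻¹ * Q)
      = Q * (b * (P⁻¹ * Q)) - c * (P * (P⁻¹ * Q)) := by
        rw [hN1, sub_mul]; simp only [mul_assoc]
    _ = Q * (P⁻¹ * (b * Q)) - c * Q := by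
        rw [← mul_assoc P P⁻¹ Q, hPP, one_mul, ← mul_assoc b P⁻¹ Q, hbPi,
          mul_assoc P⁻¹ b Q]
    _ = Q * (P⁻¹ * (b * Q)) - Q * (P⁻¹ * (P * c)) := by
        rw [hcQ, ← mul_assoc P⁻¹ P c, hPPi, one_mul]
    _ = Q * (P⁻¹ * (b * z - c * y)) := by
        rw [hN2, mul_sub P⁻¹ (b * Q) (P * c), mul_sub Q]

/-- With two elementwise-commuting embedded copies of `A` in a skew field `F`,
`[a,b] = a⁽¹⁾b⁽²⁾ - b⁽¹⁾a⁽²⁾`, `[f,g] ≠ 0`, images of `f,g,h` invertible: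
`H₁ = [f,g]⁻¹[g,h]` and `H₂ = [f,g]⁻¹[f,h]` commute. -/
theorem stmt3 {A F : Type*} [Ring A] [DivisionRing F]
    (φ ψ : A →+* F) (hφ : Function.Injective φ) (hψ : Function.Injective ψ)
    (hcomm : ∀ a b : A, φ a * ψ b = ψ b * φ a)
    (f g h : A)
    (hf1 : φ f ≠ 0) (hf2 : ψ f ≠ 0) (hg1 : φ g ≠ 0) (hg2 : ψ g ≠ 0)
    (hh1 : φ h ≠ 0) (hh2 : ψ h ≠ 0)
    (hbr : φ f * ψ g - φ g * ψ f ≠ 0) :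
    ((φ f * ψ g - φ g * ψ f)⁻¹ * (φ g * ψ h - φ h * ψ g))
        * ((φ f * ψ g - φ g * ψ f)⁻¹ * (φ f * ψ h - φ h * ψ f))
      = ((φ f * ψ g - φ g * ψ f)⁻¹ * (φ f * ψ h - φ h * ψ f))
        * ((φ f * ψ g - φ g * ψ f)⁻¹ * (φ g * ψ h - φ h * ψ g)) := by
  set a := φ f; set b := φ g; set c := φ h
  set x := ψ f; set y := ψ g; set z := ψ h
  have C : ∀ p q : A, Commute (φ p) (ψ q) := fun p q => hcomm p q
  -- normalized variables
  set b' := a⁻¹ * b with hb'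
  set c' := a⁻¹ * c with hc'
  set y' := y * x⁻¹ with hy'
  set z' := z * x⁻¹ with hz'
  -- commutation facts for the normalized variables
  have cb'y' : Commute b' y' :=
    Commute.mul_left
      (Commute.mul_right ((C f g).inv_left₀) ((C f f).inv_left₀.inv_right₀))
      (Commute.mul_right (C g g) ((C g f).inv_right₀))
  have cb'z' : Commute b' z' :=
    Commute.mul_left
      (Commute.mul_right ((C f h).inv_left₀) ((C f f).inv_left₀.inv_right₀))
      (Commute.mul_right (C g h) ((C g f).inv_right₀))
  have cc'y' : Commute c' y' :=
    Commute.mul_left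
      (Commute.mul_right ((C f g).inv_left₀) ((C f f).inv_left₀.inv_right₀))
      (Commute.mul_right (C h g) ((C h f).inv_right₀))
  have cc'z' : Commute c' z' :=
    Commute.mul_left
      (Commute.mul_right ((C f h).inv_left₀) ((C f f).inv_left₀.inv_right₀))
      (Commute.mul_right (C h h) ((C h f).inv_right₀))
  -- factorizations
  have hD : a * y - b * x = a * ((y' - b') * x) := by
    simp only [hy', hb', sub_mul, mul_sub, mul_assoc, inv_mul_cancel₀ hf2,
      mul_one, mul_inv_cancel_left₀ hf1]
  have hN : b * z - c * y = a * ((b' * z' - c' * y') * x) := by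
    simp only [hy', hz', hb', hc', sub_mul, mul_sub, mul_assoc,
      inv_mul_cancel₀ hf2, mul_one, mul_inv_cancel_left₀ hf1]
  have hQ : a * z - c * x = a * ((z' - c') * x) := by
    simp only [hz', hc', sub_mul, mul_sub, mul_assoc, inv_mul_cancel₀ hf2,
      mul_one, mul_inv_cancel_left₀ hf1]
  have hP' : y' - b' ≠ 0 := by
    intro h0
    exact hbr (by rw [hD, h0, zero_mul, mul_zero])
  have hk := key3 b' c' y' z' cb'y'.eq cb'z'.eq cc'y'.eq cc'z'.eq hP'
  have h2 : (b * z - c * y) * ((a * y - b * x)⁻¹ * (a * z - c * x))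
      = (a * z - c * x) * ((a * y - b * x)⁻¹ * (b * z - c * y)) := by
    rw [hD, hN, hQ, mul_inv_rev, mul_inv_rev]
    simp only [mul_assoc, inv_mul_cancel_left₀ hf1, mul_inv_cancel_left₀ hf2]
    congr 1
    rw [← mul_assoc (y' - b')⁻¹ _ x, ← mul_assoc _ _ x,
      ← mul_assoc (y' - b')⁻¹ _ x, ← mul_assoc _ _ x, hk]
  apply mul_left_cancel₀ hbr
  simp only [← mul_assoc, mul_inv_cancel₀ hbr, one_mul]
  simp only [mul_assoc]
  exact h2
end

section
/- Let V be a 3-dimensional vector space over a field k, Λ a nonzero alternating trilinear form on V, and a, b, c, b', c' ∈ V. Then Λ(b,c,c')Λ(a,c,b')Λ(b,b',c') + Λ(b,c,b')Λ(c,b',c')Λ(a,b,c') − Λ(b,c,b')Λ(a,c,c')Λ(b,b',c') − Λ(b,c,c')Λ(c,b',c')Λ(a,b,b') = 0. -/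
/-!
Choosing a basis `e`, every alternating trilinear form is `Λ e • e.det`, so the expression is
`(Λ e)^3` times the same expression for the determinant; in coordinates the latter is a
polynomial identity between `3 × 3` determinants.
-/

theorem Module.Basis.det_fin_three_identity {R M : Type*} [CommRing R] [AddCommGroup M]
    [Module R M] (e : Module.Basis (Fin 3) R M) (a b c b' c' : M) :
    e.det ![b, c, c'] * e.det ![a, c, b'] * e.det ![b, b', c']
      + e.det ![b, c, b'] * e.det ![c, b', c'] * e.det ![a, b, c']
      - e.det ![b, c, b'] * e.det ![a, c, c'] * e.det ![b, b', c']
      - e.det ![b, c, c'] * e.det ![c, b', c'] * e.det ![a, b, b'] = 0 := by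
  simp only [Module.Basis.det_apply, Matrix.det_fin_three, Module.Basis.toMatrix_apply,
    Matrix.cons_val_zero, Matrix.cons_val_one, Matrix.cons_val_two, Matrix.head_cons,
    Matrix.tail_cons]
  ring

theorem stmt5_general {k V : Type*} [Field k] [AddCommGroup V] [Module k V]
    (hdim : Module.finrank k V = 3)
    (Λ : V [⋀^Fin 3]→ₗ[k] k)
    (a b c b' c' : V) :
    Λ ![b, c, c'] * Λ ![a, c, b'] * Λ ![b, b', c']
      + Λ ![b, c, b'] * Λ ![c, b', c'] * Λ ![a, b, c']
      - Λ ![b, c, b'] * Λ ![a, c, c'] * Λ ![b, b', c']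
      - Λ ![b, c, c'] * Λ ![c, b', c'] * Λ ![a, b, b'] = 0 := by
  have : Module.Finite k V := Module.finite_of_finrank_eq_succ hdim
  let e := Module.finBasisOfFinrankEq k V hdim
  rw [Λ.eq_smul_basis_det e]
  simp only [AlternatingMap.smul_apply, smul_eq_mul]
  linear_combination (Λ e) ^ 3 * e.det_fin_three_identity a b c b' c'

/-- For a nonzero alternating trilinear form `Λ` on a 3-dimensional vector
space `V` over a field `k` and vectors `a, b, c, b', c' ∈ V`:
`Λ(b,c,c')Λ(a,c,b')Λ(b,b',c') + Λ(b,c,b')Λ(c,b',c')Λ(a,b,c')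
 - Λ(b,c,b')Λ(a,c,c')Λ(b,b',c') - Λ(b,c,c')Λ(c,b',c')Λ(a,b,b') = 0`. -/
theorem stmt5 {k V : Type*} [Field k] [AddCommGroup V] [Module k V]
    [FiniteDimensional k V] (hdim : Module.finrank k V = 3)
    (Λ : V [⋀^Fin 3]→ₗ[k] k) (hΛ : Λ ≠ 0)
    (a b c b' c' : V) :
    Λ ![b, c, c'] * Λ ![a, c, b'] * Λ ![b, b', c']
      + Λ ![b, c, b'] * Λ ![c, b', c'] * Λ ![a, b, c']
      - Λ ![b, c, b'] * Λ ![a, c, c'] * Λ ![b, b', c']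
      - Λ ![b, c, c'] * Λ ![c, b', c'] * Λ ![a, b, b'] = 0 :=
  stmt5_general hdim Λ a b c b' c'
end

section
/- Let A be a commutative Poisson algebra, n ≥ 1, and suppose the Poisson bracket on A^{⊗n} (tensor power with factorwise brackets Poisson-commuting across distinct factors) makes A^{⊗n} an integral domain with fraction field K. For linearly independent f_0, …, f_n ∈ A, set Δ_i = Σ_{σ ∈ S_n} ε(σ) ⊗_{j=1}^n f_{τ_i(σ,j)}, where the alternating sum is over arrangements of (f_0,…,f̂_i,…,f_n) in the n tensor slots, i.e., Δ_i = [f_0,…,f̂_i,…,f_n] := Σ_{σ} ε(σ) f_{σ(1)} ⊗ ⋯ ⊗ f_{σ(n)} with σ ranging over bijections from {1,…,n} to {0,…,n}\{i}. Then Δ_0 ≠ 0, and setting H_i = Δ_i/Δ_0 ∈ K, one has {H_i, H_j} = 0 for all i, j. -/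
/-! The `Δ_i` are the maximal minors of the `n × (n+1)` matrix `X` over `A^{⊗n}` whose `(l, q)`
entry is `f_q` placed in slot `l`. By Laplace expansion `z_p = (-1)^p Δ_p / Δ_0` lies in the kernel
of `X`, and `z_0 = 1`. Applying a derivation `D` to `X z = 0` gives `X₀ (D z) = -(D X) z`, where
`X₀` is `X` without its column `0`, so `D z` is read off from `D X`. Doing this for `D = {·, z_s}`
and then `D = {·, x_{mp}}`, and using that entries in different rows Poisson-commute, reduces
`{z_r, z_s}` to a combination of the sums `Σ_{p,q} {x_{mq}, x_{mp}} z_q z_p`, which vanish by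
skew-symmetry. Finally `Δ_0 ≠ 0` because its coordinate at `f_1 ⊗ ⋯ ⊗ f_n` in a tensor basis
extending `f` is `det 1 = 1`. -/

open scoped TensorProduct PiTensorProduct

/-- A Poisson bracket on a commutative ring. -/
def IsPoissonBracket {A : Type*} [CommRing A] (P : A → A → A) : Prop :=
  (∀ a b c : A, P (a + b) c = P a c + P b c) ∧
  (∀ a b : A, P a b = - P b a) ∧
  (∀ a b c : A, P a (b * c) = b * P a c + P a b * c) ∧
  (∀ a b c : A, P a (P b c) + P b (P c a) + P c (P a b) = 0)

open Matrix PiTensorProduct Equiv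

theorem sum_sum_mul_mul_eq_zero_of_alternating {ι R : Type*} [Fintype ι] [CommRing R]
    (Y : ι → ι → R) (hskew : ∀ p q, Y p q = -Y q p) (hdiag : ∀ p, Y p p = 0) (z : ι → R) :
    ∑ p, ∑ q, Y p q * (z p * z q) = 0 := by
  rw [← Fintype.sum_prod_type']
  refine Finset.sum_ninvolution Prod.swap (fun x => ?_) (fun x hx h => ?_)
    (fun _ => Finset.mem_univ _) Prod.swap_swap
  · simp only [Prod.fst_swap, Prod.snd_swap, hskew x.2 x.1]
    ring
  · rcases x with ⟨p, q⟩
    simp only [Prod.swap_prod_mk, Prod.mk.injEq] at h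
    simp [h.1, hdiag] at hx

theorem Derivation.apply_succ_eq_of_mulVec_eq_zero {R : Type*} [CommRing R]
    (D : Derivation ℤ R R) {N : ℕ} {X : Matrix (Fin N) (Fin (N + 1)) R}
    (hX : IsUnit (X.submatrix id Fin.succ).det) {z : Fin (N + 1) → R} (hz : X *ᵥ z = 0)
    (hz0 : z 0 = 1) (r : Fin N) :
    D (z r.succ) = -∑ m, (X.submatrix id Fin.succ)⁻¹ r m * ∑ p, D (X m p) * z p := by
  have h : X.submatrix id Fin.succ *ᵥ (fun r => D (z r.succ)) = -(X.map D *ᵥ z) := by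
    ext m
    have := congrArg D (congrFun hz m)
    rw [Pi.zero_apply, map_zero, mulVec, dotProduct, map_sum] at this
    simp only [Derivation.leibniz, smul_eq_mul, Finset.sum_add_distrib, Fin.sum_univ_succ, hz0,
      D.map_one_eq_zero, mul_comm (z _) (D _)] at this
    simp only [mulVec, dotProduct, Fin.sum_univ_succ, submatrix_apply, id, map_apply, Pi.neg_apply,
      hz0]
    linear_combination this
  have h' := congrArg ((X.submatrix id Fin.succ)⁻¹ *ᵥ ·) h
  simp only [mulVec_mulVec, nonsing_inv_mul _ hX, one_mulVec] at h'
  rw [congrFun h' r, mulVec_neg]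
  rfl

theorem Matrix.mulVec_alternating_minors_eq_zero {R : Type*} [CommRing R] {N : ℕ}
    (X : Matrix (Fin N) (Fin (N + 1)) R) :
    X *ᵥ (fun p => (-1) ^ (p : ℕ) * (X.submatrix id p.succAbove).det) = 0 := by
  ext l
  -- Laplace expansion along the top row of `X` with its row `l` stacked on top, a singular matrix
  have h := det_succ_row_zero (Matrix.of (Fin.cons (X l) X))
  rw [det_zero_of_row_eq (Fin.succ_ne_zero l).symm rfl] at h
  simp only [mulVec, dotProduct, Pi.zero_apply, h]
  refine Finset.sum_congr rfl fun p _ => ?_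
  rw [mul_left_comm, mul_assoc]
  rfl

namespace IsPoissonBracket

variable {R : Type*} [CommRing R] {P : R → R → R}

def leftDerivation (hP : IsPoissonBracket P) (b : R) : Derivation ℤ R R :=
  Derivation.mk' (AddMonoidHom.mk' (P · b) fun a a' => hP.1 a a' b).toIntLinearMap fun a c => by
    simp only [AddMonoidHom.coe_toIntLinearMap, AddMonoidHom.mk'_apply, smul_eq_mul]
    rw [hP.2.1, hP.2.2.1, hP.2.1 b c, hP.2.1 b a]
    ring

lemma apply_self [NoZeroDivisors R] (hP : IsPoissonBracket P) (h2 : (2 : R) ≠ 0) (a : R) :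
    P a a = 0 := by
  have h : (2 : R) * P a a = 0 := by
    rw [two_mul]
    nth_rewrite 1 [hP.2.1]
    exact neg_add_cancel _
  exact (mul_eq_zero.mp h).resolve_left h2

lemma intCast_mul_left (hP : IsPoissonBracket P) (n : ℤ) (a b : R) : P (n * a) b = n * P a b := by
  have h := (hP.leftDerivation b).leibniz (n : R) a
  rw [Derivation.map_intCast, smul_zero, add_zero, smul_eq_mul] at h
  exact h

lemma intCast_mul_right (hP : IsPoissonBracket P) (n : ℤ) (a b : R) : P a (n * b) = n * P a b := by
  rw [hP.2.1, hP.intCast_mul_left, hP.2.1 b, mul_neg, neg_neg]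

lemma one_left (hP : IsPoissonBracket P) (b : R) : P 1 b = 0 :=
  (hP.leftDerivation b).map_one_eq_zero

lemma one_right (hP : IsPoissonBracket P) (a : R) : P a 1 = 0 := by
  rw [hP.2.1, hP.one_left, neg_zero]

theorem apply_eq_zero_of_mulVec_eq_zero (hP : IsPoissonBracket P) (hP_self : ∀ a, P a a = 0)
    {N : ℕ} {X : Matrix (Fin N) (Fin (N + 1)) R}
    (hXX : ∀ m l p q, m ≠ l → P (X m p) (X l q) = 0)
    (hX : IsUnit (X.submatrix id Fin.succ).det) {z : Fin (N + 1) → R} (hz : X *ᵥ z = 0)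
    (hz0 : z 0 = 1) (r s : Fin (N + 1)) : P (z r) (z s) = 0 := by
  set B := (X.submatrix id Fin.succ)⁻¹
  have hderiv : ∀ b r, P (z (Fin.succ r)) b = -∑ m, B r m * ∑ p, P (X m p) b * z p :=
    fun b r => (hP.leftDerivation b).apply_succ_eq_of_mulVec_eq_zero hX hz hz0 r
  have hrow : ∀ s m p, P (X m p) (z s.succ) = B s m * ∑ q, P (X m q) (X m p) * z q := by
    intro s m p
    rw [hP.2.1, hderiv, neg_neg, Finset.sum_eq_single m]
    · intro l _ hl
      rw [Finset.sum_eq_zero fun q _ => by rw [hXX l m q p hl, zero_mul], mul_zero]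
    · simp
  have hsucc : ∀ r s : Fin N, P (z r.succ) (z s.succ) = 0 := by
    intro r s
    calc P (z r.succ) (z s.succ)
        = -∑ m, B r m * B s m * ∑ p, ∑ q, P (X m q) (X m p) * (z q * z p) := by
          simp only [hderiv, hrow, Finset.mul_sum, Finset.sum_mul, mul_assoc]
      _ = 0 := by
          refine neg_eq_zero.mpr (Finset.sum_eq_zero fun m _ => ?_)
          rw [Finset.sum_comm, sum_sum_mul_mul_eq_zero_of_alternating _ (fun p q => hP.2.1 _ _)
            (fun p => hP_self _), mul_zero]
  cases r using Fin.cases with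
  | zero => rw [hz0, hP.one_left]
  | succ r =>
    cases s using Fin.cases with
    | zero => rw [hz0, hP.one_right]
    | succ s => exact hsucc r s

end IsPoissonBracket

theorem IsPoissonBracket.apply_det_submatrix_div_eq_zero {K : Type*} [Field K] {P : K → K → K}
    (hP : IsPoissonBracket P) (hP_self : ∀ a, P a a = 0)
    {N : ℕ} {X : Matrix (Fin N) (Fin (N + 1)) K}
    (hXX : ∀ m l p q, m ≠ l → P (X m p) (X l q) = 0)
    (hX0 : (X.submatrix id (Fin.succAbove 0)).det ≠ 0) (i j : Fin (N + 1)) :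
    P ((X.submatrix id i.succAbove).det / (X.submatrix id (Fin.succAbove 0)).det)
      ((X.submatrix id j.succAbove).det / (X.submatrix id (Fin.succAbove 0)).det) = 0 := by
  set d : Fin (N + 1) → K := fun p => (X.submatrix id p.succAbove).det
  set z : Fin (N + 1) → K := fun p : Fin (N + 1) => (-1) ^ (p : ℕ) * d p / d 0
  have hz : X *ᵥ z = 0 := by
    have : z = (d 0)⁻¹ • fun p : Fin (N + 1) => (-1) ^ (p : ℕ) * d p := by
      ext p; simp only [z, Pi.smul_apply, smul_eq_mul]; ring
    rw [this, mulVec_smul, Matrix.mulVec_alternating_minors_eq_zero, smul_zero]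
  have hz0 : z 0 = 1 := by
    simp only [z, Fin.val_zero, pow_zero, one_mul]
    exact div_self hX0
  have hsign : ∀ p, d p / d 0 = (((-1) ^ (p : ℕ) : ℤ) : K) * z p := by
    intro p
    simp only [z, Int.cast_pow, Int.cast_neg, Int.cast_one, ← mul_div_assoc, ← mul_assoc, ← pow_add,
      Even.neg_one_pow ⟨_, rfl⟩, one_mul]
  rw [Fin.succAbove_zero] at hX0
  change P (d i / d 0) (d j / d 0) = 0
  rw [hsign, hsign, hP.intCast_mul_left, hP.intCast_mul_right,
    hP.apply_eq_zero_of_mulVec_eq_zero hP_self hXX (isUnit_iff_ne_zero.mpr hX0) hz hz0, mul_zero,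
    mul_zero]

theorem PiTensorProduct.tprod_eq_prod_mulSingle {ι R : Type*} {A : ι → Type*} [Fintype ι]
    [DecidableEq ι] [CommSemiring R] [∀ i, CommSemiring (A i)] [∀ i, Algebra R (A i)]
    (g : ∀ i, A i) : tprod R g = ∏ i, tprod R (Pi.mulSingle i (g i)) := by
  rw [← tprod_prod, Finset.univ_prod_mulSingle]

theorem PiTensorProduct.sum_sign_smul_tprod_eq_det {ι R A : Type*} [Fintype ι] [DecidableEq ι]
    [CommRing R] [CommRing A] [Algebra R A] (v : ι → A) :
    ∑ σ : Perm ι, (Perm.sign σ : ℤ) • tprod R (fun j => v (σ j))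
      = (Matrix.of fun i j => tprod R (Pi.mulSingle i (v j))).det := by
  rw [← det_transpose, det_apply]
  refine Finset.sum_congr rfl fun σ _ => ?_
  rw [Units.smul_def, tprod_eq_prod_mulSingle]
  rfl

theorem PiTensorProduct.sum_sign_smul_tprod_ne_zero {ι k M : Type*} [Fintype ι] [DecidableEq ι]
    [Field k] [AddCommGroup M] [Module k M] {v : ι → M} (hv : LinearIndependent k v) :
    ∑ σ : Perm ι, (Perm.sign σ : ℤ) • tprod k (fun j => v (σ j)) ≠ 0 := by
  classical
  have hs : LinearIndepOn k id (Set.range v) := hv.linearIndepOn_id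
  set b := Module.Basis.extend hs
  set p : ι → hs.extend (Set.subset_univ _) := fun i => ⟨v i, hs.subset_extend _ ⟨i, rfl⟩⟩
  have hcoord : ∀ i j, b.repr (v i) (p j) = (1 : Matrix ι ι k) i j := by
    intro i j
    rw [show v i = b (p i) from (Module.Basis.extend_apply_self hs (p i)).symm,
      Module.Basis.repr_self, Finsupp.single_apply, one_apply]
    simp [p, hv.injective.eq_iff]
  have hrepr : (Basis.piTensorProduct fun _ : ι => b).repr
      (∑ σ : Perm ι, (Perm.sign σ : ℤ) • tprod k (fun j => v (σ j))) p
        = det (1 : Matrix ι ι k) := by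
    simp [det_apply, Basis.piTensorProduct_repr_tprod_apply, hcoord, Units.smul_def]
  intro h
  rw [h, map_zero, det_one] at hrepr
  exact zero_ne_one hrepr

theorem stmt8_general {k A : Type*} [Field k] (hchar : (2 : k) ≠ 0)
    [CommRing A] [Algebra k A]
    (P : A → A → A)
    {n : ℕ}
    [IsDomain (⨂[k] (_ : Fin n), A)]
    -- the slot embeddings `a ↦ 1 ⊗ ⋯ ⊗ a ⊗ ⋯ ⊗ 1`
    (ι : Fin n → A → ⨂[k] (_ : Fin n), A)
    (hι : ∀ j a, ι j a = PiTensorProduct.tprod k (Function.update (fun _ => (1 : A)) j a))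
    -- the product Poisson structure on the tensor power
    (PT : (⨂[k] (_ : Fin n), A) → (⨂[k] (_ : Fin n), A) → ⨂[k] (_ : Fin n), A)
    (hPTfac : ∀ (j l : Fin n) (a b : A),
      PT (ι j a) (ι l b) = if j = l then ι j (P a b) else 0)
    -- the extended Poisson bracket on the fraction field
    (P' : FractionRing (⨂[k] (_ : Fin n), A) → FractionRing (⨂[k] (_ : Fin n), A) →
      FractionRing (⨂[k] (_ : Fin n), A))
    (hP' : IsPoissonBracket P')
    (hext : ∀ x y : ⨂[k] (_ : Fin n), A,
      P' (algebraMap _ (FractionRing (⨂[k] (_ : Fin n), A)) x)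
         (algebraMap _ (FractionRing (⨂[k] (_ : Fin n), A)) y)
        = algebraMap _ (FractionRing (⨂[k] (_ : Fin n), A)) (PT x y))
    (f : Fin (n + 1) → A) (hind : LinearIndependent k f)
    (Δ : Fin (n + 1) → ⨂[k] (_ : Fin n), A)
    (hΔ : ∀ i, Δ i = ∑ σ : Equiv.Perm (Fin n),
      (Equiv.Perm.sign σ : ℤ) • PiTensorProduct.tprod k (fun j => f (i.succAbove (σ j)))) :
    Δ 0 ≠ 0 ∧
    ∀ i j : Fin (n + 1),
      P' (algebraMap _ (FractionRing (⨂[k] (_ : Fin n), A)) (Δ i)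
            / algebraMap _ (FractionRing (⨂[k] (_ : Fin n), A)) (Δ 0))
         (algebraMap _ (FractionRing (⨂[k] (_ : Fin n), A)) (Δ j)
            / algebraMap _ (FractionRing (⨂[k] (_ : Fin n), A)) (Δ 0)) = 0 := by
  set φ := algebraMap (⨂[k] (_ : Fin n), A) (FractionRing (⨂[k] (_ : Fin n), A))
  set X : Matrix (Fin n) (Fin (n + 1)) (⨂[k] (_ : Fin n), A) := Matrix.of fun l q => ι l (f q)
  have hΔX : ∀ p, φ (Δ p) = ((X.map φ).submatrix id p.succAbove).det := by
    intro p
    rw [hΔ, sum_sign_smul_tprod_eq_det (fun c => f (p.succAbove c)), RingHom.map_det]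
    congr 1
    ext l c
    simp only [RingHom.mapMatrix_apply, map_apply, of_apply, submatrix_apply, id, X, hι]
    rfl
  have hΔ0 : Δ 0 ≠ 0 := by
    rw [hΔ]
    exact (sum_sign_smul_tprod_ne_zero (hind.comp _ (Fin.succAbove_right_injective (p := 0))) :)
  have hφ2 : (2 : FractionRing (⨂[k] (_ : Fin n), A)) ≠ 0 := by
    rw [← map_ofNat (algebraMap k _) 2]
    exact (map_ne_zero _).mpr hchar
  have hXX : ∀ m l p q, m ≠ l → P' (X.map φ m p) (X.map φ l q) = 0 := by
    intro m l p q hml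
    simp only [map_apply, X, of_apply, φ, hext, hPTfac, if_neg hml, map_zero]
  have hX0 : ((X.map φ).submatrix id (Fin.succAbove 0)).det ≠ 0 := by
    rw [← hΔX]
    exact (map_ne_zero_iff φ (IsFractionRing.injective _ _)).mpr hΔ0
  refine ⟨hΔ0, fun i j => ?_⟩
  rw [hΔX, hΔX, hΔX]
  exact hP'.apply_det_submatrix_div_eq_zero (hP'.apply_self hφ2) hXX hX0 i j

/-- Let `A` be a commutative Poisson algebra over a field `k` of
characteristic ≠ 2, `n ≥ 1`, and suppose the `n`-th tensor power `A^{⊗n}`, with the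
product (factorwise) Poisson bracket `PT`, is an integral domain with fraction field `K`
carrying the extended bracket `P'`. For linearly independent `f₀, …, f_n ∈ A`, set
`Δ_i = [f₀,…,f̂_i,…,f_n] = Σ_{σ} ε(σ) f_{σ(1)} ⊗ ⋯ ⊗ f_{σ(n)}` (the sum over bijections
`σ : {1,…,n} → {0,…,n}\{i}`, realized via `Fin.succAbove i` composed with permutations of
`Fin n`). Then `Δ₀ ≠ 0` and, with `H_i = Δ_i/Δ₀ ∈ K`, one has `{H_i, H_j} = 0` for all
`i, j`. -/
theorem stmt8 {k A : Type*} [Field k] (hchar : (2 : k) ≠ 0)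
    [CommRing A] [Algebra k A]
    (P : A → A → A) (hP : IsPoissonBracket P)
    {n : ℕ} (hn : 1 ≤ n)
    [IsDomain (⨂[k] (_ : Fin n), A)]
    -- the slot embeddings `a ↦ 1 ⊗ ⋯ ⊗ a ⊗ ⋯ ⊗ 1`
    (ι : Fin n → A → ⨂[k] (_ : Fin n), A)
    (hι : ∀ j a, ι j a = PiTensorProduct.tprod k (Function.update (fun _ => (1 : A)) j a))
    -- the product Poisson structure on the tensor power
    (PT : (⨂[k] (_ : Fin n), A) → (⨂[k] (_ : Fin n), A) → ⨂[k] (_ : Fin n), A)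
    (hPT : IsPoissonBracket PT)
    (hPTfac : ∀ (j l : Fin n) (a b : A),
      PT (ι j a) (ι l b) = if j = l then ι j (P a b) else 0)
    -- the extended Poisson bracket on the fraction field
    (P' : FractionRing (⨂[k] (_ : Fin n), A) → FractionRing (⨂[k] (_ : Fin n), A) →
      FractionRing (⨂[k] (_ : Fin n), A))
    (hP' : IsPoissonBracket P')
    (hext : ∀ x y : ⨂[k] (_ : Fin n), A,
      P' (algebraMap _ (FractionRing (⨂[k] (_ : Fin n), A)) x)
         (algebraMap _ (FractionRing (⨂[k] (_ : Fin n), A)) y)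
        = algebraMap _ (FractionRing (⨂[k] (_ : Fin n), A)) (PT x y))
    (f : Fin (n + 1) → A) (hind : LinearIndependent k f)
    (Δ : Fin (n + 1) → ⨂[k] (_ : Fin n), A)
    (hΔ : ∀ i, Δ i = ∑ σ : Equiv.Perm (Fin n),
      (Equiv.Perm.sign σ : ℤ) • PiTensorProduct.tprod k (fun j => f (i.succAbove (σ j)))) :
    Δ 0 ≠ 0 ∧
    ∀ i j : Fin (n + 1),
      P' (algebraMap _ (FractionRing (⨂[k] (_ : Fin n), A)) (Δ i)
            / algebraMap _ (FractionRing (⨂[k] (_ : Fin n), A)) (Δ 0))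
         (algebraMap _ (FractionRing (⨂[k] (_ : Fin n), A)) (Δ j)
            / algebraMap _ (FractionRing (⨂[k] (_ : Fin n), A)) (Δ 0)) = 0 :=
  stmt8_general hchar P ι hι PT hPTfac P' hP' hext f hind Δ hΔ
end

section
/- With the notation of the Poisson-commuting family theorem (n = 2 case): let A be a commutative Poisson algebra such that A ⊗ A is an integral domain, and let f, g, h ∈ A be linearly independent. Define Δ_0 = f⊗g − g⊗f, Δ_1 = f⊗h − h⊗f, Δ_2 = g⊗h − h⊗g in A ⊗ A, and H_1 = Δ_2/Δ_0, H_2 = Δ_1/Δ_0 in Frac(A⊗A). Then {H_1, H_2} = 0 for the extended product Poisson bracket. -/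
open scoped TensorProduct

section PBaux
variable {R : Type*} [CommRing R] {Q : R → R → R}

lemma PB.addr (hQ : IsPoissonBracket Q) (a b c : R) : Q a (b + c) = Q a b + Q a c := by
  rw [hQ.2.1 a (b+c), hQ.1, hQ.2.1 b a, hQ.2.1 c a]; ring

lemma PB.zerol (hQ : IsPoissonBracket Q) (b : R) : Q 0 b = 0 := by
  have h := hQ.1 0 0 b
  rw [add_zero] at h
  exact (left_eq_add.mp h)

lemma PB.negl (hQ : IsPoissonBracket Q) (a b : R) : Q (-a) b = - Q a b := by
  have h := hQ.1 a (-a) b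
  rw [add_neg_cancel, PB.zerol hQ] at h
  linear_combination -h

lemma PB.subl (hQ : IsPoissonBracket Q) (a b c : R) : Q (a - b) c = Q a c - Q b c := by
  rw [sub_eq_add_neg, hQ.1, PB.negl hQ]; ring

lemma PB.subr (hQ : IsPoissonBracket Q) (a b c : R) : Q a (b - c) = Q a b - Q a c := by
  rw [hQ.2.1 a (b - c), PB.subl hQ, hQ.2.1 b a, hQ.2.1 c a]; ring

lemma PB.leibl (hQ : IsPoissonBracket Q) (a b c : R) : Q (a * b) c = a * Q b c + b * Q a c := by
  rw [hQ.2.1 (a*b) c, hQ.2.2.1, hQ.2.1 c a, hQ.2.1 c b]; ring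

end PBaux

/-- Quotient rule consequence: if `c{a,b} + a{b,c} + b{c,a} = 0` then `{a/c, b/c} = 0`. -/
lemma quot_bracket {K : Type*} [Field K] {Q : K → K → K} (hQ : IsPoissonBracket Q)
    (h2 : (2 : K) ≠ 0) (a b c x y : K) (hc : c ≠ 0) (hx : x * c = a) (hy : y * c = b)
    (hzero : c * Q a b + a * Q b c + b * Q c a = 0) : Q x y = 0 := by
  subst hx; subst hy
  have z : Q c c = 0 := by
    have h := hQ.2.1 c c
    have h2' : (2 : K) * Q c c = 0 := by linear_combination h
    rcases mul_eq_zero.mp h2' with h' | h'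
    · exact absurd h' h2
    · exact h'
  have E1 : Q (x * c) (y * c) = x * (y * Q c c + Q c y * c) + c * (y * Q x c + Q x y * c) := by
    rw [PB.leibl hQ, hQ.2.2.1, hQ.2.2.1]
  have E2 : Q (y * c) c = y * Q c c + c * Q y c := by rw [PB.leibl hQ]
  have E3 : Q c (x * c) = x * Q c c + Q c x * c := hQ.2.2.1 c x c
  have s1 : Q y c = - Q c y := hQ.2.1 y c
  have s2 : Q c x = - Q x c := hQ.2.1 c x
  have hfin : c ^ 3 * Q x y = 0 := by
    linear_combination hzero - c * E1 - (x * c) * E2 - (y * c) * E3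
      - (x * c ^ 2) * s1 - (y * c ^ 2) * s2 - (3 * x * y * c) * z
  exact (mul_eq_zero.mp hfin).resolve_left (pow_ne_zero 3 hc)

lemma tmul_sub_ne_zero {k A : Type*} [Field k] [AddCommGroup A] [Module k A]
    (f g : A) (hli : LinearIndependent k ![f, g]) :
    f ⊗ₜ[k] g - g ⊗ₜ[k] f ≠ 0 := by
  intro h0
  have hf : f ∈ Submodule.span k (Set.range ![f, g]) :=
    Submodule.subset_span ⟨0, rfl⟩
  have hg : g ∈ Submodule.span k (Set.range ![f, g]) :=
    Submodule.subset_span ⟨1, rfl⟩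
  obtain ⟨lam, hlam⟩ := LinearMap.exists_extend
    ((Finsupp.lapply (0 : Fin 2)).comp (hli.repr :
      Submodule.span k (Set.range ![f, g]) →ₗ[k] (Fin 2 →₀ k)))
  have hlamf : lam f = 1 := by
    have := congrArg (fun F => F ⟨f, hf⟩) hlam
    simp only [LinearMap.comp_apply, Submodule.subtype_apply] at this
    rw [show lam f = lam ((⟨f, hf⟩ : Submodule.span k (Set.range ![f, g])) : A) from rfl, this,
      hli.repr_eq_single 0 ⟨f, hf⟩ (by simp)]
    simp
  have hlamg : lam g = 0 := by
    have := congrArg (fun F => F ⟨g, hg⟩) hlam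
    simp only [LinearMap.comp_apply, Submodule.subtype_apply] at this
    rw [show lam g = lam ((⟨g, hg⟩ : Submodule.span k (Set.range ![f, g])) : A) from rfl, this,
      hli.repr_eq_single 1 ⟨g, hg⟩ (by simp)]
    simp [Finsupp.single_apply]
  have hT := congrArg
    (fun z => (TensorProduct.lid k A) ((TensorProduct.map lam LinearMap.id) z)) h0
  simp only [map_sub, TensorProduct.map_tmul, TensorProduct.lid_tmul, LinearMap.id_apply,
    hlamf, hlamg, one_smul, zero_smul, sub_zero, map_zero] at hT
  exact hli.ne_zero 1 (by simpa using hT)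

/-- Let `A` be a commutative Poisson algebra over a field `k` of
characteristic ≠ 2 such that `A ⊗ A` is an integral domain, equipped with the product
Poisson structure `PT` (so `{a⊗1, 1⊗b} = 0`, `{a⊗1, b⊗1} = {a,b}⊗1`,
`{1⊗a, 1⊗b} = 1⊗{a,b}`), and let `P'` be the (unique) extension of `PT` to
`Frac(A ⊗ A)`. For linearly independent `f, g, h ∈ A`, put
`Δ₀ = f⊗g - g⊗f`, `Δ₁ = f⊗h - h⊗f`, `Δ₂ = g⊗h - h⊗g`, `H₁ = Δ₂/Δ₀`, `H₂ = Δ₁/Δ₀`.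
Then `{H₁, H₂} = 0`. -/
theorem stmt9 {k A : Type*} [Field k] (hchar : (2 : k) ≠ 0)
    [CommRing A] [Algebra k A]
    (P : A → A → A) (hP : IsPoissonBracket P)
    [IsDomain (A ⊗[k] A)]
    (PT : A ⊗[k] A → A ⊗[k] A → A ⊗[k] A) (hPT : IsPoissonBracket PT)
    (hPT1 : ∀ a b : A, PT (a ⊗ₜ[k] 1) (1 ⊗ₜ[k] b) = 0)
    (hPT2 : ∀ a b : A, PT (a ⊗ₜ[k] 1) (b ⊗ₜ[k] 1) = P a b ⊗ₜ[k] 1)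
    (hPT3 : ∀ a b : A, PT (1 ⊗ₜ[k] a) (1 ⊗ₜ[k] b) = 1 ⊗ₜ[k] P a b)
    (P' : FractionRing (A ⊗[k] A) → FractionRing (A ⊗[k] A) → FractionRing (A ⊗[k] A))
    (hP' : IsPoissonBracket P')
    (hext : ∀ x y : A ⊗[k] A,
      P' (algebraMap (A ⊗[k] A) (FractionRing (A ⊗[k] A)) x)
         (algebraMap (A ⊗[k] A) (FractionRing (A ⊗[k] A)) y)
        = algebraMap (A ⊗[k] A) (FractionRing (A ⊗[k] A)) (PT x y))
    (f g h : A) (hind : LinearIndependent k ![f, g, h]) :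
    P' (algebraMap (A ⊗[k] A) (FractionRing (A ⊗[k] A)) (g ⊗ₜ[k] h - h ⊗ₜ[k] g)
          / algebraMap (A ⊗[k] A) (FractionRing (A ⊗[k] A)) (f ⊗ₜ[k] g - g ⊗ₜ[k] f))
       (algebraMap (A ⊗[k] A) (FractionRing (A ⊗[k] A)) (f ⊗ₜ[k] h - h ⊗ₜ[k] f)
          / algebraMap (A ⊗[k] A) (FractionRing (A ⊗[k] A)) (f ⊗ₜ[k] g - g ⊗ₜ[k] f)) = 0 := by
  classical
  -- 2 is invertible in A
  have h2A : IsUnit (2 : A) := by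
    have h1 : IsUnit ((algebraMap k A) (2 : k)) := (Ne.isUnit hchar).map (algebraMap k A)
    rwa [map_ofNat] at h1
  have hPaa : ∀ a : A, P a a = 0 := by
    intro a
    have h1 := hP.2.1 a a
    have h2 : (2 : A) * P a a = (2 : A) * 0 := by linear_combination h1
    exact h2A.mul_left_cancel h2
  -- 2 is nonzero in the fraction field
  have h2R : (2 : A ⊗[k] A) ≠ 0 := by
    intro h0
    apply hchar
    apply (algebraMap k (A ⊗[k] A)).injective
    rw [map_ofNat, map_zero, h0]
  have h2K : (2 : FractionRing (A ⊗[k] A)) ≠ 0 := by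
    intro h0
    apply h2R
    apply IsFractionRing.injective (A ⊗[k] A) (FractionRing (A ⊗[k] A))
    rw [map_ofNat, map_zero, h0]
  -- key tensor bracket formula
  have hcross : ∀ y z : A, PT ((1:A) ⊗ₜ[k] y) (z ⊗ₜ[k] (1:A)) = 0 := by
    intro y z
    rw [hPT.2.1, hPT1]; simp
  have KT : ∀ x y z w : A, PT (x ⊗ₜ[k] y) (z ⊗ₜ[k] w)
      = (P x z ⊗ₜ[k] (1:A)) * (((1:A) ⊗ₜ[k] y) * ((1:A) ⊗ₜ[k] w))
        + ((x ⊗ₜ[k] (1:A)) * (z ⊗ₜ[k] (1:A))) * ((1:A) ⊗ₜ[k] P y w) := by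
    intro x y z w
    have hx : x ⊗ₜ[k] y = (x ⊗ₜ[k] (1:A)) * ((1:A) ⊗ₜ[k] y) := by
      rw [Algebra.TensorProduct.tmul_mul_tmul, mul_one, one_mul]
    have hz : z ⊗ₜ[k] w = (z ⊗ₜ[k] (1:A)) * ((1:A) ⊗ₜ[k] w) := by
      rw [Algebra.TensorProduct.tmul_mul_tmul, mul_one, one_mul]
    rw [hx, hz, PB.leibl hPT, hPT.2.2.1, hPT.2.2.1, hPT1, hPT2, hPT3, hcross]
    ring
  -- subtraction expansion
  have hsub : ∀ a b c d : A ⊗[k] A, PT (a - b) (c - d) = PT a c - PT a d - PT b c + PT b d := by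
    intro a b c d
    rw [PB.subl hPT, PB.subr hPT, PB.subr hPT]; ring
  -- the core identity in A ⊗ A
  have core : (f ⊗ₜ[k] g - g ⊗ₜ[k] f) * PT (g ⊗ₜ[k] h - h ⊗ₜ[k] g) (f ⊗ₜ[k] h - h ⊗ₜ[k] f)
      + (g ⊗ₜ[k] h - h ⊗ₜ[k] g) * PT (f ⊗ₜ[k] h - h ⊗ₜ[k] f) (f ⊗ₜ[k] g - g ⊗ₜ[k] f)
      + (f ⊗ₜ[k] h - h ⊗ₜ[k] f) * PT (f ⊗ₜ[k] g - g ⊗ₜ[k] f) (g ⊗ₜ[k] h - h ⊗ₜ[k] g) = 0 := by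
    rw [hsub, hsub, hsub]
    simp only [KT]
    rw [hP.2.1 g f, hP.2.1 h f, hP.2.1 h g]
    simp only [hPaa, TensorProduct.neg_tmul, TensorProduct.tmul_neg, TensorProduct.zero_tmul,
      TensorProduct.tmul_zero]
    have tsp : ∀ a b : A, a ⊗ₜ[k] b = (a ⊗ₜ[k] (1:A)) * ((1:A) ⊗ₜ[k] b) := by
      intro a b
      rw [Algebra.TensorProduct.tmul_mul_tmul, mul_one, one_mul]
    rw [tsp f g, tsp g f, tsp f h, tsp h f, tsp g h, tsp h g]
    ring
  -- nonvanishing of the denominator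
  have hli : LinearIndependent k ![f, g] := by
    have hcomp := hind.comp (![0, 1] : Fin 2 → Fin 3) (by decide)
    have heq : ![f, g, h] ∘ (![0, 1] : Fin 2 → Fin 3) = ![f, g] := by
      funext i; fin_cases i <;> rfl
    rwa [heq] at hcomp
  have hd0ne : (f ⊗ₜ[k] g - g ⊗ₜ[k] f : A ⊗[k] A) ≠ 0 := tmul_sub_ne_zero f g hli
  have hc : algebraMap (A ⊗[k] A) (FractionRing (A ⊗[k] A)) (f ⊗ₜ[k] g - g ⊗ₜ[k] f) ≠ 0 := by
    intro h0
    exact hd0ne (IsFractionRing.injective (A ⊗[k] A) (FractionRing (A ⊗[k] A))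
      (by rw [h0, map_zero]))
  -- apply the quotient rule lemma
  apply quot_bracket hP' h2K _ _ _ _ _ hc (div_mul_cancel₀ _ hc) (div_mul_cancel₀ _ hc)
  rw [hext, hext, hext, ← map_mul, ← map_mul, ← map_mul, ← map_add, ← map_add, core, map_zero]
end

section
/- Let F be a division ring, and let (f_{i,j}) for 0 ≤ i ≤ 2, 1 ≤ j ≤ 2 be elements of F such that f_{i,1} commutes with f_{k,2} for all i, k. Define Δ_0 = f_{1,1}f_{2,2} − f_{2,1}f_{1,2}, Δ_1 = f_{0,1}f_{2,2} − f_{2,1}f_{0,2}, Δ_2 = f_{0,1}f_{1,2} − f_{1,1}f_{0,2}. Assume Δ_0, Δ_1, Δ_2 and all f_{i,j} are nonzero. Then Δ_0^{-1}Δ_1 and Δ_0^{-1}Δ_2 commute. -/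
lemma stmt10_aux {F : Type*} [DivisionRing F] (a b c w p : F)
    (Caw : Commute a w) (Cbw : Commute b w) (Ccw : Commute c w)
    (Cap : Commute a p) (Cbp : Commute b p) (Ccp : Commute c p)
    (hA : b - c * w ≠ 0) :
    (b - c * w)⁻¹ * (a - c * p) * ((b - c * w)⁻¹ * (a * w - b * p))
      = (b - c * w)⁻¹ * (a * w - b * p) * ((b - c * w)⁻¹ * (a - c * p)) := by
  set A := b - c * w with hAdef
  set X := a - c * p with hXdef
  set Y := a * w - b * p with hYdef
  have CwA : Commute w A := (Cbw.symm).sub_right ((Ccw.symm).mul_right (Commute.refl w))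
  have CpX : Commute p X := (Cap.symm).sub_right ((Ccp.symm).mul_right (Commute.refl p))
  have e1 : p * b = b * p := Cbp.symm.eq
  have e2 : p * (c * w) = c * (p * w) := by rw [← mul_assoc, Ccp.symm.eq, mul_assoc]
  have e3 : w * a = a * w := Caw.symm.eq
  have e4 : w * (c * p) = c * (w * p) := by rw [← mul_assoc, Ccw.symm.eq, mul_assoc]
  have hY1 : Y = w * X - A * p := by
    rw [hYdef, hXdef, hAdef, mul_sub, sub_mul, e3, e4]
    noncomm_ring
  have hY2 : Y = X * w - p * A := by
    rw [hYdef, hXdef, hAdef, sub_mul, mul_sub, e1, e2]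
    noncomm_ring
  clear_value A X Y
  clear hAdef hXdef hYdef e1 e2 e3 e4
  have key1 : X * A⁻¹ * Y = X * w * A⁻¹ * X - p * X := by
    rw [hY1, mul_sub, ← mul_assoc, ← mul_assoc, mul_assoc X A⁻¹ w,
      CwA.inv_right₀.symm.eq, mul_assoc X A⁻¹ A, inv_mul_cancel₀ hA, mul_one,
      ← mul_assoc, CpX.symm.eq]
  have key2 : Y * A⁻¹ * X = X * w * A⁻¹ * X - p * X := by
    rw [hY2, sub_mul, sub_mul, mul_assoc p A A⁻¹, mul_inv_cancel₀ hA, mul_one]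
  calc A⁻¹ * X * (A⁻¹ * Y) = A⁻¹ * (X * A⁻¹ * Y) := by noncomm_ring
    _ = A⁻¹ * (Y * A⁻¹ * X) := by rw [key1, key2]
    _ = A⁻¹ * Y * (A⁻¹ * X) := by noncomm_ring

/-- In a skew field `F`, given `f i j` (`i ∈ {0,1,2}`, columns `j ∈ {1,2}`
modelled as `Fin 2`) with column 1 commuting elementwise with column 2, and all entries
and all 2×2 minors `Δ₀ = f₁₁f₂₂ - f₂₁f₁₂`, `Δ₁ = f₀₁f₂₂ - f₂₁f₀₂`,
`Δ₂ = f₀₁f₁₂ - f₁₁f₀₂` nonzero, the elements `Δ₀⁻¹Δ₁` and `Δ₀⁻¹Δ₂` commute. -/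
theorem stmt10 {F : Type*} [DivisionRing F]
    (f : Fin 3 → Fin 2 → F)
    (hcomm : ∀ i k : Fin 3, f i 0 * f k 1 = f k 1 * f i 0)
    (hne : ∀ i j, f i j ≠ 0)
    (hΔ0 : f 1 0 * f 2 1 - f 2 0 * f 1 1 ≠ 0)
    (hΔ1 : f 0 0 * f 2 1 - f 2 0 * f 0 1 ≠ 0)
    (hΔ2 : f 0 0 * f 1 1 - f 1 0 * f 0 1 ≠ 0) :
    ((f 1 0 * f 2 1 - f 2 0 * f 1 1)⁻¹ * (f 0 0 * f 2 1 - f 2 0 * f 0 1))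
        * ((f 1 0 * f 2 1 - f 2 0 * f 1 1)⁻¹ * (f 0 0 * f 1 1 - f 1 0 * f 0 1))
      = ((f 1 0 * f 2 1 - f 2 0 * f 1 1)⁻¹ * (f 0 0 * f 1 1 - f 1 0 * f 0 1))
        * ((f 1 0 * f 2 1 - f 2 0 * f 1 1)⁻¹ * (f 0 0 * f 2 1 - f 2 0 * f 0 1)) := by
  set a := f 0 0
  set b := f 1 0
  set c := f 2 0
  set x := f 0 1
  set y := f 1 1
  set z := f 2 1
  have hz : z ≠ 0 := hne 2 1
  have Cax : Commute a x := hcomm 0 0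
  have Cay : Commute a y := hcomm 0 1
  have Caz : Commute a z := hcomm 0 2
  have Cbx : Commute b x := hcomm 1 0
  have Cby : Commute b y := hcomm 1 1
  have Cbz : Commute b z := hcomm 1 2
  have Ccx : Commute c x := hcomm 2 0
  have Ccy : Commute c y := hcomm 2 1
  have Ccz : Commute c z := hcomm 2 2
  set w := z⁻¹ * y with hwdef
  set p := z⁻¹ * x with hpdef
  have Caw : Commute a w := (Caz.inv_right₀).mul_right Cay
  have Cbw : Commute b w := (Cbz.inv_right₀).mul_right Cby
  have Ccw : Commute c w := (Ccz.inv_right₀).mul_right Ccy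
  have Cap : Commute a p := (Caz.inv_right₀).mul_right Cax
  have Cbp : Commute b p := (Cbz.inv_right₀).mul_right Cbx
  have Ccp : Commute c p := (Ccz.inv_right₀).mul_right Ccx
  have hD0 : b * z - c * y = z * (b - c * w) := by
    rw [mul_sub, ← Cbz.eq, hwdef, ← mul_assoc, ← mul_assoc, ← Ccz.eq,
      mul_assoc c z, mul_inv_cancel₀ hz, mul_one]
  have hD1 : a * z - c * x = z * (a - c * p) := by
    rw [mul_sub, ← Caz.eq, hpdef, ← mul_assoc, ← mul_assoc, ← Ccz.eq,
      mul_assoc c z, mul_inv_cancel₀ hz, mul_one]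
  have hD2 : a * y - b * x = z * (a * w - b * p) := by
    rw [hwdef, hpdef, mul_sub, ← mul_assoc z a, ← Caz.eq, ← mul_assoc z b, ← Cbz.eq,
      mul_assoc a z, mul_assoc b z, mul_inv_cancel_left₀ hz, mul_inv_cancel_left₀ hz]
  have hA : b - c * w ≠ 0 := by
    intro h
    apply hΔ0
    rw [hD0, h, mul_zero]
  have key := stmt10_aux a b c w p Caw Cbw Ccw Cap Cbp Ccp hA
  rw [hD0, hD1, hD2]
  simp only [mul_inv_rev, mul_assoc, inv_mul_cancel_left₀ hz]
  simp only [mul_assoc] at key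
  exact key
end

section
/- Let A be an algebra over k, complete and separated for the filtration Fil^i(A) generated by products of iterated commutators of total commutator-degree ≥ i. Let (f_{i,j}), 0 ≤ i ≤ n, 1 ≤ j ≤ n, be elements of A with f_{i,j} f_{k,ℓ} = f_{k,ℓ} f_{i,j} whenever j ≠ ℓ. Assume Δ_0 = Σ_{σ∈S_n} ε(σ) f_{1,σ(1)} ⋯ f_{n,σ(n)} is invertible. Then the elements H_i = Δ_0^{-1} Δ_i (with Δ_i the analogous alternating sum omitting row i and including row 0) pairwise commute, in the special case n = 2 where all 2×2 minors are additionally invertible modulo Fil^1. -/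
/-- `CommDeg k A d` is the `k`-span of `(d+1)`-fold iterated commutators of elements of
`A` (so `CommDeg k A 0 = A` and an element of `CommDeg k A d` has commutator-degree `d`):
`Comm_{d+1}(A)` in the notation of the paper. -/
def CommDeg (k A : Type*) [Field k] [Ring A] [Algebra k A] : ℕ → Submodule k A
  | 0 => ⊤
  | d + 1 => Submodule.span k {x | ∃ a b : A, b ∈ CommDeg k A d ∧ x = a * b - b * a}

/-- `Fil k A i` is the span of products of iterated commutators of total
commutator-degree at least `i`:
`Fil^i(A) = Σ_{d₁ + ⋯ + d_r ≥ i} Comm_{d₁+1}(A) ⋯ Comm_{d_r+1}(A)`. -/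
def Fil (k A : Type*) [Field k] [Ring A] [Algebra k A] (i : ℕ) : Submodule k A :=
  ⨆ (l : List ℕ) (_ : i ≤ l.sum), (l.map (CommDeg k A)).prod

set_option maxHeartbeats 1000000

section FilLemmas
variable {k A : Type*} [Field k] [Ring A] [Algebra k A]

lemma commDeg_zero : CommDeg k A 0 = (⊤ : Submodule k A) := rfl

lemma commDeg_one_def : CommDeg k A 1 =
    Submodule.span k {x | ∃ a b : A, b ∈ CommDeg k A 0 ∧ x = a * b - b * a} := rfl

lemma listProd_le_fil {i : ℕ} (l : List ℕ) (h : i ≤ l.sum) :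
    (l.map (CommDeg k A)).prod ≤ Fil k A i := by
  unfold Fil
  exact le_iSup_of_le l (le_iSup_of_le h le_rfl)

lemma mem_fil_zero (t : A) : t ∈ Fil k A 0 := by
  have h2 := listProd_le_fil (k := k) (A := A) (i := 0) [0] (by simp)
  simp only [List.map_cons, List.map_nil, List.prod_cons, List.prod_nil, mul_one] at h2
  exact h2 (by rw [commDeg_zero]; exact Submodule.mem_top)

lemma fil_mul_le (i j : ℕ) : Fil k A i * Fil k A j ≤ Fil k A (i + j) := by
  conv_lhs => rw [Fil, Fil]
  rw [Submodule.iSup_mul]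
  apply iSup_le; intro l
  rw [Submodule.iSup_mul]
  apply iSup_le; intro hl
  rw [Submodule.mul_iSup]
  apply iSup_le; intro l'
  rw [Submodule.mul_iSup]
  apply iSup_le; intro hl'
  calc (l.map (CommDeg k A)).prod * (l'.map (CommDeg k A)).prod
      = ((l ++ l').map (CommDeg k A)).prod := by rw [List.map_append, List.prod_append]
    _ ≤ Fil k A (i + j) := listProd_le_fil _ (by rw [List.sum_append]; omega)

lemma fil_mul_mem {i j : ℕ} {x y : A} (hx : x ∈ Fil k A i) (hy : y ∈ Fil k A j) :
    x * y ∈ Fil k A (i + j) := fil_mul_le i j (Submodule.mul_mem_mul hx hy)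

lemma comm_mem_fil (a b : A) : a * b - b * a ∈ Fil k A 1 := by
  have h1 : a * b - b * a ∈ CommDeg k A 1 := by
    rw [commDeg_one_def]
    exact Submodule.subset_span ⟨a, b, ⟨by rw [commDeg_zero]; exact Submodule.mem_top, rfl⟩⟩
  have h2 := listProd_le_fil (k := k) (A := A) (i := 1) [1] (by simp)
  simp only [List.map_cons, List.map_nil, List.prod_cons, List.prod_nil, mul_one] at h2
  exact h2 h1

end FilLemmas

section Key
variable {k A : Type*} [Field k] [Ring A] [Algebra k A]

lemma key (hsep : ⨅ i : ℕ, Fil k A i = ⊥) (x1 x2 y1 y2 v : A)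
    (h11 : x1 * y1 = y1 * x1) (h12 : x1 * y2 = y2 * x1)
    (h21 : x2 * y1 = y1 * x2) (h22 : x2 * y2 = y2 * x2)
    (hv1 : v * (x1 * y2 - x2 * y1) = 1) (hv2 : (x1 * y2 - x2 * y1) * v = 1) :
    y1 * (v * y2) = y2 * (v * y1) ∧ y2 * (v * x1) - y1 * (v * x2) = 1 := by
  have c11 : Commute x1 y1 := h11
  have c12 : Commute x1 y2 := h12
  have c21 : Commute x2 y1 := h21
  have c22 : Commute x2 y2 := h22
  -- α commutes with y1, y2
  have hay1 : (x1 * x2 - x2 * x1) * y1 = y1 * (x1 * x2 - x2 * x1) :=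
    ((c11.mul_left c21).sub_left (c21.mul_left c11)).eq
  have hay2 : (x1 * x2 - x2 * x1) * y2 = y2 * (x1 * x2 - x2 * x1) :=
    ((c12.mul_left c22).sub_left (c22.mul_left c12)).eq
  -- x_i D = D x_i - α y_i
  have hi1 : x1 * (x1 * y2 - x2 * y1)
      = (x1 * y2 - x2 * y1) * x1 - (x1 * x2 - x2 * x1) * y1 := by
    have e1 : (x1 * y2) * x1 = x1 * (x1 * y2) := by rw [mul_assoc, ← h12]
    have e2 : (x2 * y1) * x1 = (x2 * x1) * y1 := by rw [mul_assoc, ← h11, ← mul_assoc]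
    rw [sub_mul, e1, e2]; noncomm_ring
  have hi2 : x2 * (x1 * y2 - x2 * y1)
      = (x1 * y2 - x2 * y1) * x2 - (x1 * x2 - x2 * x1) * y2 := by
    have e1 : (x1 * y2) * x2 = (x1 * x2) * y2 := by rw [mul_assoc, ← h22, ← mul_assoc]
    have e2 : (x2 * y1) * x2 = x2 * (x2 * y1) := by rw [mul_assoc, ← h21]
    rw [sub_mul, e1, e2]; noncomm_ring
  -- y_i D = D y_i + x_i β
  have hi5 : y1 * (x1 * y2 - x2 * y1)
      = (x1 * y2 - x2 * y1) * y1 + x1 * (y1 * y2 - y2 * y1) := by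
    have e1 : (x1 * y2) * y1 = x1 * (y2 * y1) := by rw [mul_assoc]
    have e2 : (x2 * y1) * y1 = x2 * (y1 * y1) := by rw [mul_assoc]
    have e3 : y1 * (x1 * y2) = x1 * (y1 * y2) := by rw [← mul_assoc, ← h11, mul_assoc]
    have e4 : y1 * (x2 * y1) = x2 * (y1 * y1) := by rw [← mul_assoc, ← h21, mul_assoc]
    rw [mul_sub, sub_mul, e1, e2, e3, e4]; noncomm_ring
  have hi6 : y2 * (x1 * y2 - x2 * y1)
      = (x1 * y2 - x2 * y1) * y2 + x2 * (y1 * y2 - y2 * y1) := by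
    have e1 : (x1 * y2) * y2 = x1 * (y2 * y2) := by rw [mul_assoc]
    have e2 : (x2 * y1) * y2 = x2 * (y1 * y2) := by rw [mul_assoc]
    have e3 : y2 * (x1 * y2) = x1 * (y2 * y2) := by rw [← mul_assoc, ← h12, mul_assoc]
    have e4 : y2 * (x2 * y1) = x2 * (y2 * y1) := by rw [← mul_assoc, ← h22, mul_assoc]
    rw [mul_sub, sub_mul, e1, e2, e3, e4]; noncomm_ring
  -- idB : Q * D = D + P * α
  have idB : (y2 * (v * x1) - y1 * (v * x2)) * (x1 * y2 - x2 * y1)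
      = (x1 * y2 - x2 * y1)
        + (y1 * (v * y2) - y2 * (v * y1)) * (x1 * x2 - x2 * x1) := by
    calc (y2 * (v * x1) - y1 * (v * x2)) * (x1 * y2 - x2 * y1)
        = y2 * (v * (x1 * (x1 * y2 - x2 * y1)))
          - y1 * (v * (x2 * (x1 * y2 - x2 * y1))) := by noncomm_ring
      _ = y2 * (v * ((x1 * y2 - x2 * y1) * x1 - (x1 * x2 - x2 * x1) * y1))
          - y1 * (v * ((x1 * y2 - x2 * y1) * x2 - (x1 * x2 - x2 * x1) * y2)) := by
            rw [hi1, hi2]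
      _ = (y2 * (v * (x1 * y2 - x2 * y1))) * x1
          - (y1 * (v * (x1 * y2 - x2 * y1))) * x2
          - (y2 * (v * ((x1 * x2 - x2 * x1) * y1))
            - y1 * (v * ((x1 * x2 - x2 * x1) * y2))) := by noncomm_ring
      _ = (y2 * (1:A)) * x1 - (y1 * (1:A)) * x2
          - (y2 * (v * (y1 * (x1 * x2 - x2 * x1)))
            - y1 * (v * (y2 * (x1 * x2 - x2 * x1)))) := by rw [hv1, hay1, hay2]
      _ = y2 * x1 - y1 * x2
          - (y2 * (v * (y1 * (x1 * x2 - x2 * x1)))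
            - y1 * (v * (y2 * (x1 * x2 - x2 * x1)))) := by rw [mul_one, mul_one]
      _ = x1 * y2 - x2 * y1
          - (y2 * (v * (y1 * (x1 * x2 - x2 * x1)))
            - y1 * (v * (y2 * (x1 * x2 - x2 * x1)))) := by rw [← h12, ← h21]
      _ = (x1 * y2 - x2 * y1)
          + (y1 * (v * y2) - y2 * (v * y1)) * (x1 * x2 - x2 * x1) := by noncomm_ring
  -- idA : P * D = β - Q * β
  have idA : (y1 * (v * y2) - y2 * (v * y1)) * (x1 * y2 - x2 * y1)
      = (y1 * y2 - y2 * y1)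
        - (y2 * (v * x1) - y1 * (v * x2)) * (y1 * y2 - y2 * y1) := by
    calc (y1 * (v * y2) - y2 * (v * y1)) * (x1 * y2 - x2 * y1)
        = y1 * (v * (y2 * (x1 * y2 - x2 * y1)))
          - y2 * (v * (y1 * (x1 * y2 - x2 * y1))) := by noncomm_ring
      _ = y1 * (v * ((x1 * y2 - x2 * y1) * y2 + x2 * (y1 * y2 - y2 * y1)))
          - y2 * (v * ((x1 * y2 - x2 * y1) * y1 + x1 * (y1 * y2 - y2 * y1))) := by
            rw [hi6, hi5]
      _ = (y1 * (v * (x1 * y2 - x2 * y1))) * y2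
          - (y2 * (v * (x1 * y2 - x2 * y1))) * y1
          + (y1 * (v * (x2 * (y1 * y2 - y2 * y1)))
            - y2 * (v * (x1 * (y1 * y2 - y2 * y1)))) := by noncomm_ring
      _ = (y1 * (1:A)) * y2 - (y2 * (1:A)) * y1
          + (y1 * (v * (x2 * (y1 * y2 - y2 * y1)))
            - y2 * (v * (x1 * (y1 * y2 - y2 * y1)))) := by rw [hv1]
      _ = (y1 * y2 - y2 * y1)
          - (y2 * (v * x1) - y1 * (v * x2)) * (y1 * y2 - y2 * y1) := by noncomm_ring
  -- Q = 1 + P * (α v)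
  have hQeq : y2 * (v * x1) - y1 * (v * x2)
      = 1 + (y1 * (v * y2) - y2 * (v * y1)) * ((x1 * x2 - x2 * x1) * v) := by
    calc y2 * (v * x1) - y1 * (v * x2)
        = (y2 * (v * x1) - y1 * (v * x2)) * ((x1 * y2 - x2 * y1) * v) := by
          rw [hv2, mul_one]
      _ = ((y2 * (v * x1) - y1 * (v * x2)) * (x1 * y2 - x2 * y1)) * v := by
          noncomm_ring
      _ = ((x1 * y2 - x2 * y1)
          + (y1 * (v * y2) - y2 * (v * y1)) * (x1 * x2 - x2 * x1)) * v := by rw [idB]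
      _ = (x1 * y2 - x2 * y1) * v
          + (y1 * (v * y2) - y2 * (v * y1)) * ((x1 * x2 - x2 * x1) * v) := by
          noncomm_ring
      _ = 1 + (y1 * (v * y2) - y2 * (v * y1)) * ((x1 * x2 - x2 * x1) * v) := by rw [hv2]
  -- P = β v - Q * (β v)
  have hPeq : y1 * (v * y2) - y2 * (v * y1)
      = (y1 * y2 - y2 * y1) * v
        - (y2 * (v * x1) - y1 * (v * x2)) * ((y1 * y2 - y2 * y1) * v) := by
    calc y1 * (v * y2) - y2 * (v * y1)
        = (y1 * (v * y2) - y2 * (v * y1)) * ((x1 * y2 - x2 * y1) * v) := by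
          rw [hv2, mul_one]
      _ = ((y1 * (v * y2) - y2 * (v * y1)) * (x1 * y2 - x2 * y1)) * v := by
          noncomm_ring
      _ = ((y1 * y2 - y2 * y1)
          - (y2 * (v * x1) - y1 * (v * x2)) * (y1 * y2 - y2 * y1)) * v := by rw [idA]
      _ = (y1 * y2 - y2 * y1) * v
          - (y2 * (v * x1) - y1 * (v * x2)) * ((y1 * y2 - y2 * y1) * v) := by
          noncomm_ring
  -- recursion : P = -(P * ((α v) * (β v)))
  have hrec : y1 * (v * y2) - y2 * (v * y1)
      = -((y1 * (v * y2) - y2 * (v * y1))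
          * (((x1 * x2 - x2 * x1) * v) * ((y1 * y2 - y2 * y1) * v))) := by
    conv_lhs => rw [hPeq]
    rw [hQeq]
    noncomm_ring
  have hw : ((x1 * x2 - x2 * x1) * v) * ((y1 * y2 - y2 * y1) * v) ∈ Fil k A 1 :=
    fil_mul_mem (i := 1) (j := 0)
      (fil_mul_mem (i := 1) (j := 0) (comm_mem_fil x1 x2) (mem_fil_zero v))
      (mem_fil_zero ((y1 * y2 - y2 * y1) * v))
  have hfil : ∀ n : ℕ, y1 * (v * y2) - y2 * (v * y1) ∈ Fil k A n := by
    intro n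
    induction n with
    | zero => exact mem_fil_zero _
    | succ n ih =>
      rw [hrec]
      exact Submodule.neg_mem _ (fil_mul_mem (i := n) (j := 1) ih hw)
  have hP0 : y1 * (v * y2) - y2 * (v * y1) = 0 := by
    have hm : y1 * (v * y2) - y2 * (v * y1) ∈ ⨅ i : ℕ, Fil k A i :=
      (Submodule.mem_iInf _).mpr hfil
    rw [hsep] at hm
    simpa using hm
  refine ⟨sub_eq_zero.mp hP0, ?_⟩
  rw [hQeq, hP0, zero_mul, add_zero]

end Key


/-- Let `A` be an algebra over a field `k` of characteristic 0 which is
complete and separated for the topology defined by the filtration `Fil^i(A)`.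
Let `f i j` (`0 ≤ i ≤ 2`, two columns) be elements of `A` with columns commuting
elementwise, `Δ₀ = f₁₁f₂₂ - f₂₁f₁₂` invertible, and the 2×2 minors
`Δ₁ = f₀₁f₂₂ - f₂₁f₀₂` and `Δ₂ = f₀₁f₁₂ - f₁₁f₀₂` invertible modulo `Fil¹(A)`.
Then `H₁ = Δ₀⁻¹Δ₁` and `H₂ = Δ₀⁻¹Δ₂` commute. -/
theorem stmt19 {k A : Type*} [Field k] [CharZero k] [Ring A] [Algebra k A]
    (hsep : ⨅ i : ℕ, Fil k A i = ⊥)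
    (hcomplete : ∀ x : ℕ → A,
      (∀ i : ℕ, ∃ N : ℕ, ∀ p q : ℕ, N ≤ p → N ≤ q → x p - x q ∈ Fil k A i) →
      ∃ y : A, ∀ i : ℕ, ∃ N : ℕ, ∀ p : ℕ, N ≤ p → x p - y ∈ Fil k A i)
    (f : Fin 3 → Fin 2 → A)
    (hcomm : ∀ i j : Fin 3, f i 0 * f j 1 = f j 1 * f i 0)
    (v : A)
    (hv1 : v * (f 1 0 * f 2 1 - f 2 0 * f 1 1) = 1)
    (hv2 : (f 1 0 * f 2 1 - f 2 0 * f 1 1) * v = 1)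
    (hΔ1 : ∃ u : A, (f 0 0 * f 2 1 - f 2 0 * f 0 1) * u - 1 ∈ Fil k A 1 ∧
      u * (f 0 0 * f 2 1 - f 2 0 * f 0 1) - 1 ∈ Fil k A 1)
    (hΔ2 : ∃ u : A, (f 0 0 * f 1 1 - f 1 0 * f 0 1) * u - 1 ∈ Fil k A 1 ∧
      u * (f 0 0 * f 1 1 - f 1 0 * f 0 1) - 1 ∈ Fil k A 1) :
    (v * (f 0 0 * f 2 1 - f 2 0 * f 0 1)) * (v * (f 0 0 * f 1 1 - f 1 0 * f 0 1))
      = (v * (f 0 0 * f 1 1 - f 1 0 * f 0 1)) * (v * (f 0 0 * f 2 1 - f 2 0 * f 0 1)) := by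
  -- notation: a_i = f i 0 (first column), b_i = f i 1 (second column)
  -- First application: (x1,x2,y1,y2) = (a1,a2,b1,b2)
  obtain ⟨hb, hq⟩ := key hsep (f 1 0) (f 2 0) (f 1 1) (f 2 1) v
    (hcomm 1 1) (hcomm 1 2) (hcomm 2 1) (hcomm 2 2) hv1 hv2
  -- hb : b1*(v*b2) = b2*(v*b1),  hq : b2*(v*a1) - b1*(v*a2) = 1
  -- Second application: (x1,x2,y1,y2) = (b2,b1,a2,a1)
  have hDD : f 2 1 * f 1 0 - f 1 1 * f 2 0 = f 1 0 * f 2 1 - f 2 0 * f 1 1 := by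
    rw [hcomm 1 2, hcomm 2 1]
  have hv1' : v * (f 2 1 * f 1 0 - f 1 1 * f 2 0) = 1 := by rw [hDD]; exact hv1
  have hv2' : (f 2 1 * f 1 0 - f 1 1 * f 2 0) * v = 1 := by rw [hDD]; exact hv2
  obtain ⟨ha, hq'⟩ := key hsep (f 2 1) (f 1 1) (f 2 0) (f 1 0) v
    (hcomm 2 2).symm (hcomm 1 2).symm (hcomm 2 1).symm (hcomm 1 1).symm hv1' hv2'
  -- ha : a2*(v*a1) = a1*(v*a2),  hq' : a1*(v*b2) - a2*(v*b1) = 1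
  have key3' : f 2 1 * (v * f 1 0) = 1 + f 1 1 * (v * f 2 0) := sub_eq_iff_eq_add.mp hq
  have key4' : f 2 0 * (v * f 1 1) = f 1 0 * (v * f 2 1) - 1 := by
    have h2 : f 1 0 * (v * f 2 1) = 1 + f 2 0 * (v * f 1 1) := sub_eq_iff_eq_add.mp hq'
    rw [h2]; noncomm_ring
  -- main exchange identity
  have E : (f 0 0 * f 2 1 - f 2 0 * f 0 1) * (v * (f 0 0 * f 1 1 - f 1 0 * f 0 1))
      = (f 0 0 * f 1 1 - f 1 0 * f 0 1) * (v * (f 0 0 * f 2 1 - f 2 0 * f 0 1)) := by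
    calc (f 0 0 * f 2 1 - f 2 0 * f 0 1) * (v * (f 0 0 * f 1 1 - f 1 0 * f 0 1))
        = (f 0 0 * f 2 1) * (v * (f 0 0 * f 1 1)) - (f 0 0 * f 2 1) * (v * (f 1 0 * f 0 1))
          - (f 2 0 * f 0 1) * (v * (f 0 0 * f 1 1)) + (f 2 0 * f 0 1) * (v * (f 1 0 * f 0 1)) := by
            noncomm_ring
      _ = (f 0 0 * f 2 1) * (v * (f 1 1 * f 0 0)) - (f 0 0 * f 2 1) * (v * (f 1 0 * f 0 1))
          - (f 0 1 * f 2 0) * (v * (f 1 1 * f 0 0)) + (f 0 1 * f 2 0) * (v * (f 1 0 * f 0 1)) := by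
            rw [hcomm 0 1, hcomm 2 0]
      _ = f 0 0 * (f 2 1 * (v * f 1 1)) * f 0 0 - f 0 0 * (f 2 1 * (v * f 1 0)) * f 0 1
          - f 0 1 * (f 2 0 * (v * f 1 1)) * f 0 0 + f 0 1 * (f 2 0 * (v * f 1 0)) * f 0 1 := by
            noncomm_ring
      _ = f 0 0 * (f 1 1 * (v * f 2 1)) * f 0 0 - f 0 0 * ((1:A) + f 1 1 * (v * f 2 0)) * f 0 1
          - f 0 1 * (f 1 0 * (v * f 2 1) - 1) * f 0 0 + f 0 1 * (f 1 0 * (v * f 2 0)) * f 0 1 := by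
            rw [hb, key3', key4', ha]
      _ = (f 0 0 * (f 1 1 * (v * f 2 1)) * f 0 0 - f 0 0 * (f 1 1 * (v * f 2 0)) * f 0 1
          - f 0 1 * (f 1 0 * (v * f 2 1)) * f 0 0 + f 0 1 * (f 1 0 * (v * f 2 0)) * f 0 1)
          + (f 0 1 * f 0 0 - f 0 0 * f 0 1) := by noncomm_ring
      _ = (f 0 0 * (f 1 1 * (v * f 2 1)) * f 0 0 - f 0 0 * (f 1 1 * (v * f 2 0)) * f 0 1
          - f 0 1 * (f 1 0 * (v * f 2 1)) * f 0 0 + f 0 1 * (f 1 0 * (v * f 2 0)) * f 0 1)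
          + (f 0 1 * f 0 0 - f 0 1 * f 0 0) := by rw [hcomm 0 0]
      _ = (f 0 0 * f 1 1) * (v * (f 2 1 * f 0 0)) - (f 0 0 * f 1 1) * (v * (f 2 0 * f 0 1))
          - (f 0 1 * f 1 0) * (v * (f 2 1 * f 0 0)) + (f 0 1 * f 1 0) * (v * (f 2 0 * f 0 1)) := by
            noncomm_ring
      _ = (f 0 0 * f 1 1) * (v * (f 0 0 * f 2 1)) - (f 0 0 * f 1 1) * (v * (f 2 0 * f 0 1))
          - (f 1 0 * f 0 1) * (v * (f 0 0 * f 2 1)) + (f 1 0 * f 0 1) * (v * (f 2 0 * f 0 1)) := by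
            rw [hcomm 0 2, hcomm 1 0]
      _ = (f 0 0 * f 1 1 - f 1 0 * f 0 1) * (v * (f 0 0 * f 2 1 - f 2 0 * f 0 1)) := by
            noncomm_ring
  calc (v * (f 0 0 * f 2 1 - f 2 0 * f 0 1)) * (v * (f 0 0 * f 1 1 - f 1 0 * f 0 1))
      = v * ((f 0 0 * f 2 1 - f 2 0 * f 0 1) * (v * (f 0 0 * f 1 1 - f 1 0 * f 0 1))) := by
        rw [mul_assoc]
    _ = v * ((f 0 0 * f 1 1 - f 1 0 * f 0 1) * (v * (f 0 0 * f 2 1 - f 2 0 * f 0 1))) := by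
        rw [E]
    _ = (v * (f 0 0 * f 1 1 - f 1 0 * f 0 1)) * (v * (f 0 0 * f 2 1 - f 2 0 * f 0 1)) := by
        rw [mul_assoc]
end
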